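/- arXiv:1203.5859 — 2 statements merged into one kernel-verified Lean document; each statement's English description precedes it below -/
import Mathlib

section
/- Let σ be a measure on ℝ with all moments finite and let s_k = ∫_ℝ u^k dσ(u) for all k ≥ 0. Let (ℓ_k)_{k≥0} ⊆ ℕ₀ be such that for every u ∈ ℝ the sequence (u^{ℓ_k})_{k≥0} is positive, and assume u ↦ u^{k+ℓ_k} is σ-integrable for all k. Then the subsequence (s̃_k)_{k≥0} defined by s̃_k = s_{k+ℓ_k} is a positive sequence. -/
/-! Since `s (k + ℓ k) = ∫ u ^ k * u ^ ℓ k ∂σ`, it suffices that positivity survives multiplying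
the `k`-th term by `a ^ k` (replace the coefficients `x i` by `x i * a ^ i`) and integrating a
pointwise positive family (the Hankel form is linear, so it commutes with the integral). -/

open MeasureTheory

/-- A real sequence `s` is positive if all its Hankel quadratic forms are nonnegative. -/
def IsPosSeq (s : ℕ → ℝ) : Prop :=
  ∀ (m : ℕ) (x : ℕ → ℝ),
    0 ≤ ∑ i ∈ Finset.range (m + 1), ∑ j ∈ Finset.range (m + 1), x i * x j * s (i + j)

theorem IsPosSeq.pow_mul {t : ℕ → ℝ} (ht : IsPosSeq t) (a : ℝ) :
    IsPosSeq fun k => a ^ k * t k := by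
  intro m x
  convert ht m (fun i => x i * a ^ i) using 1
  refine Finset.sum_congr rfl fun i _ => Finset.sum_congr rfl fun j _ => ?_
  simp only [pow_add]
  ring

theorem IsPosSeq.integral {α : Type*} [MeasurableSpace α] {μ : Measure α} {f : α → ℕ → ℝ}
    (hf : ∀ k, Integrable (fun u => f u k) μ) (hpos : ∀ᵐ u ∂μ, IsPosSeq (f u)) :
    IsPosSeq fun k => ∫ u, f u k ∂μ := by
  intro m x
  have hterm : ∀ i j, Integrable (fun u => x i * x j * f u (i + j)) μ :=
    fun i j => (hf (i + j)).const_mul _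
  have hsum : ∑ i ∈ Finset.range (m + 1), ∑ j ∈ Finset.range (m + 1),
      x i * x j * ∫ u, f u (i + j) ∂μ
      = ∫ u, ∑ i ∈ Finset.range (m + 1), ∑ j ∈ Finset.range (m + 1),
          x i * x j * f u (i + j) ∂μ := by
    rw [integral_finsetSum _ fun i _ => integrable_finsetSum _ fun j _ => hterm i j]
    refine Finset.sum_congr rfl fun i _ => ?_
    rw [integral_finsetSum _ fun j _ => hterm i j]
    simp only [integral_const_mul]
  rw [hsum]
  exact integral_nonneg_of_ae (hpos.mono fun u hu => hu m x)

theorem subsequence_isPosSeq_of_power_posSeq_general (σ : Measure ℝ) (s : ℕ → ℝ)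
    (hs : ∀ k : ℕ, s k = ∫ u, u ^ k ∂σ)
    (ℓ : ℕ → ℕ)
    (hℓ : ∀ u : ℝ, IsPosSeq fun k => u ^ ℓ k)
    (hint' : ∀ k : ℕ, Integrable (fun u : ℝ => u ^ (k + ℓ k)) σ) :
    IsPosSeq fun k => s (k + ℓ k) := by
  have hpos : ∀ u : ℝ, IsPosSeq fun k => u ^ (k + ℓ k) := fun u => by
    simpa only [pow_add] using (hℓ u).pow_mul u
  simpa only [hs] using IsPosSeq.integral hint' (.of_forall hpos)

/-- If `s` is the moment sequence of a measure `σ` on `ℝ` and `(ℓ_k) ⊆ ℕ₀` is such that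
for every `u ∈ ℝ` the sequence `(u^{ℓ_k})` is positive, then the subsequence
`s̃_k = s_{k + ℓ_k}` is positive. -/
theorem subsequence_isPosSeq_of_power_posSeq (σ : Measure ℝ) (s : ℕ → ℝ)
    (hint : ∀ k : ℕ, Integrable (fun u : ℝ => u ^ k) σ)
    (hs : ∀ k : ℕ, s k = ∫ u, u ^ k ∂σ)
    (ℓ : ℕ → ℕ)
    (hℓ : ∀ u : ℝ, IsPosSeq fun k => u ^ ℓ k)
    (hint' : ∀ k : ℕ, Integrable (fun u : ℝ => u ^ (k + ℓ k)) σ) :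
    IsPosSeq fun k => s (k + ℓ k) :=
  subsequence_isPosSeq_of_power_posSeq_general σ s hs ℓ hℓ hint'
end

section
/- Let (ℓ_k)_{k≥0} ⊆ ℕ₀ be such that for every u ∈ ℝ the sequence (u^{ℓ_k})_{k≥0} is positive. Then: (1) ℓ_i is even for every even index i; and (2) for every odd index i ≥ 1, 2·ℓ_i = ℓ_{i−1} + ℓ_{i+1}. -/
namespace IsPosSeq

variable {s : ℕ → ℝ}

theorem nonneg_of_even (hs : IsPosSeq s) {i : ℕ} (hi : Even i) : 0 ≤ s i := by
  obtain ⟨n, rfl⟩ := hi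
  simpa [Finset.sum_ite_eq'] using hs n fun k => if k = n then 1 else 0

theorem two_term_nonneg (hs : IsPosSeq s) (n : ℕ) (a b : ℝ) :
    0 ≤ a * a * s (2 * n) + 2 * a * b * s (2 * n + 1) + b * b * s (2 * n + 2) := by
  have h := hs (n + 1) fun k => (if k = n then a else 0) + (if k = n + 1 then b else 0)
  simp only [mul_add, mul_ite, add_mul, ite_mul, zero_mul, mul_zero, Finset.sum_add_distrib,
    Finset.sum_ite_eq', Finset.mem_range, Order.lt_add_one_iff, le_add_iff_nonneg_right, zero_le,
    ↓reduceIte, lt_add_iff_pos_right, Order.lt_one_iff] at h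
  rw [show n + n = 2 * n by ring, show n + 1 + n = 2 * n + 1 by ring,
    show n + (n + 1) = 2 * n + 1 by ring, show n + 1 + (n + 1) = 2 * n + 2 by ring] at h
  linarith

theorem sq_le_mul_of_odd (hs : IsPosSeq s) {i : ℕ} (hi : Odd i) :
    s i ^ 2 ≤ s (i - 1) * s (i + 1) := by
  obtain ⟨n, rfl⟩ := hi
  have h : discrim (s (2 * n + 2)) (2 * s (2 * n + 1)) (s (2 * n)) ≤ 0 :=
    discrim_le_zero fun x => by linarith [hs.two_term_nonneg n 1 x]
  rw [discrim] at h
  rw [Nat.add_sub_cancel]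
  linarith

end IsPosSeq

theorem Nat.eq_of_forall_pow_le_pow {a b : ℕ} (h : ∀ u : ℝ, 0 < u → u ^ a ≤ u ^ b) : a = b :=
  le_antisymm ((pow_le_pow_iff_right₀ one_lt_two).mp (h 2 two_pos))
    ((pow_le_pow_iff_right_of_lt_one₀ one_half_pos one_half_lt_one).mp (h _ one_half_pos))

/-- If `(ℓ_k) ⊆ ℕ₀` is such that for every `u ∈ ℝ` the sequence `(u^{ℓ_k})` is positive,
then (1) `ℓ_i` is even for every even index `i`, and (2) for every odd index `i`,
`2 ℓ_i = ℓ_{i−1} + ℓ_{i+1}`. -/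
theorem exponent_sequence_even_and_arithmetic (ℓ : ℕ → ℕ)
    (hℓ : ∀ u : ℝ, IsPosSeq fun k => u ^ ℓ k) :
    (∀ i : ℕ, Even i → Even (ℓ i)) ∧
      (∀ i : ℕ, 1 ≤ i → Odd i → 2 * ℓ i = ℓ (i - 1) + ℓ (i + 1)) := by
  refine ⟨fun i hi => ?_, fun i _ hi => Nat.eq_of_forall_pow_le_pow fun u _ => ?_⟩
  · have h := (hℓ (-1)).nonneg_of_even hi
    by_contra hodd
    rw [Nat.not_even_iff_odd.mp hodd |>.neg_one_pow] at h
    norm_num at h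
  · calc u ^ (2 * ℓ i) = (u ^ ℓ i) ^ 2 := by rw [mul_comm, pow_mul]
      _ ≤ u ^ ℓ (i - 1) * u ^ ℓ (i + 1) := (hℓ u).sq_le_mul_of_odd hi
      _ = u ^ (ℓ (i - 1) + ℓ (i + 1)) := (pow_add u _ _).symm
end
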